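/- arXiv:2408.07030 — 4 statements merged into one kernel-verified Lean document; each statement's English description precedes it below -/
import Mathlib

section
/- There is no Σ₁ formula φ(x, p) in the language of set theory with a fixed set parameter p such that, for all ordinals α, α is a cardinal if and only if φ(α, p) holds in V. (Proof idea: pick α large with p ∈ L_α coded below α, and consider the least β > α with L_β ⊨ 'there is a largest cardinal ν'; by upward absoluteness of Σ₁ statements ν would be a cardinal, but ν is not a cardinal in L_{β+1}.) -/
/-!
Suppose the cardinals were the ordinals `α` with `∃ w, ψ (w, α, p)`, `ψ` bounded. Choose an
infinite cardinal `e ≥ |V_(rank p + 1)|` and a witness `w` for the cardinal `κ = e⁺`. A Skolem hull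
`X` of `V_(rank p + 1) ∪ (e + 1) ∪ {κ, w}` of size `e` is `Δ₀`-elementary in `V`, and its Mostowski
collapse `π` fixes `p` and the ordinals `≤ e`. Since bounded formulas are absolute for transitive
sets, `ψ (π w, π κ, p)` holds, so the ordinal `π κ` would be a cardinal; but `e < π κ` and
`|π κ| ≤ |X| = e`.
-/

/-- A ZF-set is a (von Neumann) ordinal iff it is transitive and all of
its elements are transitive. -/
def IsOrd (x : ZFSet) : Prop := x.IsTransitive ∧ ∀ y ∈ x, ZFSet.IsTransitive y

/-- An ordinal `x` is a cardinal iff no element of `x` surjects onto `x`. -/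
def IsCardZ (x : ZFSet) : Prop :=
  IsOrd x ∧ ¬ ∃ b ∈ x, ∃ f : ZFSet, ZFSet.IsFunc b x f ∧
    ∀ c ∈ x, ∃ a ∈ b, ZFSet.pair a c ∈ f

/-- Δ₀ (bounded) formulas in the language of set theory, with de Bruijn variables. -/
inductive D0 : Type
  | mem : ℕ → ℕ → D0
  | eq : ℕ → ℕ → D0
  | not : D0 → D0
  | and : D0 → D0 → D0
  | or : D0 → D0 → D0
  | ball : ℕ → D0 → D0
  | bex : ℕ → D0 → D0

/-- Prepend a value to a valuation (de Bruijn style). -/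
def consV (x : ZFSet) (v : ℕ → ZFSet) : ℕ → ZFSet
  | 0 => x
  | n + 1 => v n

/-- Satisfaction (in `V`) of Δ₀ formulas; bounded quantifiers bind variable `0`. -/
def SatD0 : D0 → (ℕ → ZFSet) → Prop
  | .mem i j, v => v i ∈ v j
  | .eq i j, v => v i = v j
  | .not φ, v => ¬ SatD0 φ v
  | .and φ ψ, v => SatD0 φ v ∧ SatD0 ψ v
  | .or φ ψ, v => SatD0 φ v ∨ SatD0 ψ v
  | .ball n φ, v => ∀ x ∈ v n, SatD0 φ (consV x v)
  | .bex n φ, v => ∃ x ∈ v n, SatD0 φ (consV x v)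

universe u

open Cardinal ZFSet FirstOrder

namespace D0

def varBound : D0 → ℕ
  | .mem i j | .eq i j => max i j + 1
  | .not φ => φ.varBound
  | .and φ ψ | .or φ ψ => max φ.varBound ψ.varBound
  | .ball n φ | .bex n φ => max (n + 1) φ.varBound

def encode : D0 → ℕ
  | .mem i j => Nat.pair 0 (Nat.pair i j)
  | .eq i j => Nat.pair 1 (Nat.pair i j)
  | .not φ => Nat.pair 2 φ.encode
  | .and φ ψ => Nat.pair 3 (Nat.pair φ.encode ψ.encode)
  | .or φ ψ => Nat.pair 4 (Nat.pair φ.encode ψ.encode)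
  | .ball n φ => Nat.pair 5 (Nat.pair n φ.encode)
  | .bex n φ => Nat.pair 6 (Nat.pair n φ.encode)

theorem encode_injective : Function.Injective encode := by
  intro φ
  induction φ <;> intro ψ h <;> cases ψ <;> simp only [encode, Nat.pair_eq_pair] at h <;>
    grind

instance : Countable D0 := encode_injective.countable

end D0

theorem comp_consV (f : ZFSet.{u} → ZFSet.{u}) (x : ZFSet.{u}) (v : ℕ → ZFSet.{u}) :
    f ∘ consV x v = consV (f x) (f ∘ v) := by
  funext i
  cases i <;> rfl

theorem consV_mem {X : Set ZFSet.{u}} {x : ZFSet.{u}} {v : ℕ → ZFSet.{u}} (hx : x ∈ X)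
    (hv : ∀ i, v i ∈ X) : ∀ i, consV x v i ∈ X
  | 0 => hx
  | i + 1 => hv i

theorem consV_congr {x : ZFSet.{u}} {v v' : ℕ → ZFSet.{u}} {m : ℕ} (h : ∀ i < m, v i = v' i) :
    ∀ i < m + 1, consV x v i = consV x v' i
  | 0, _ => rfl
  | i + 1, hi => h i (by omega)

theorem satD0_congr {φ : D0} {v v' : ℕ → ZFSet.{u}} (h : ∀ i < φ.varBound, v i = v' i) :
    SatD0 φ v ↔ SatD0 φ v' := by
  induction φ generalizing v v' with
  | mem i j | eq i j =>
    simp only [D0.varBound] at h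
    rw [SatD0, SatD0, h i (by omega), h j (by omega)]
  | not φ ih => exact not_congr (ih h)
  | and φ ψ ihφ ihψ | or φ ψ ihφ ihψ =>
    simp only [D0.varBound, lt_max_iff] at h
    rw [SatD0, SatD0, ihφ fun i hi => h i (.inl hi), ihψ fun i hi => h i (.inr hi)]
  | ball n φ ih | bex n φ ih =>
    simp only [D0.varBound, lt_max_iff] at h
    rw [SatD0, SatD0, h n (.inl (by omega))]
    have hcons (x) : SatD0 φ (consV x v) ↔ SatD0 φ (consV x v') :=
      ih fun i hi => consV_congr (fun i hi => h i (.inr hi)) i (by omega)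
    simp only [hcons]

namespace ZFSet

variable {X : Set ZFSet.{u}} {x y z : ZFSet.{u}}

/-- The Mostowski collapse of `X`, extended to all sets. -/
noncomputable def collapse (X : Set ZFSet.{u}) : ZFSet.{u} → ZFSet.{u} :=
  mem_wf.fix fun x IH => range fun y : x.sep (· ∈ X) => IH y (mem_sep.1 y.2).1

theorem mem_collapse : y ∈ collapse X x ↔ ∃ z ∈ x, z ∈ X ∧ collapse X z = y := by
  rw [collapse, mem_wf.fix_eq, mem_range]
  simp only [Subtype.exists, mem_sep, exists_prop, and_assoc]

theorem collapse_mem_collapse (hz : z ∈ x) (hzX : z ∈ X) : collapse X z ∈ collapse X x :=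
  mem_collapse.2 ⟨z, hz, hzX, rfl⟩

theorem collapse_eq_self {T : ZFSet.{u}} (hT : T.IsTransitive) (hTX : (T : Set ZFSet) ⊆ X)
    (hx : x ∈ T) : collapse X x = x := by
  induction x using ZFSet.inductionOn with
  | _ x ih =>
  ext y
  rw [mem_collapse]
  constructor
  · rintro ⟨z, hzx, -, rfl⟩
    rwa [ih z hzx (hT.mem_trans hzx hx)]
  · intro hy
    have hyT := hT.mem_trans hy hx
    exact ⟨y, hy, hTX hyT, ih y hy hyT⟩

theorem IsTransitive.collapse (hx : x.IsTransitive) : (collapse X x).IsTransitive := by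
  intro y hy t ht
  obtain ⟨z, hzx, -, rfl⟩ := mem_collapse.1 hy
  obtain ⟨t, htz, htX, rfl⟩ := mem_collapse.1 ht
  exact collapse_mem_collapse (hx.mem_trans htz hzx) htX

theorem IsOrdinal.collapse (hx : x.IsOrdinal) : (collapse X x).IsOrdinal := by
  rw [isOrdinal_iff_forall_mem_isTransitive] at hx ⊢
  refine ⟨hx.1.collapse, fun y hy => ?_⟩
  obtain ⟨z, hzx, -, rfl⟩ := mem_collapse.1 hy
  exact (hx.2 z hzx).collapse

theorem lift_card_collapse_le (X : Set ZFSet.{u}) (x : ZFSet.{u}) :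
    lift.{u + 1} (collapse X x).card ≤ #X := by
  rw [← cardinalMk_coe_sort]
  refine (mk_le_mk_of_subset fun y hy => ?_).trans (mk_image_le (f := collapse X))
  obtain ⟨z, -, hzX, rfl⟩ := mem_collapse.1 hy
  exact Set.mem_image_of_mem _ hzX

end ZFSet

/-- The Tarski–Vaught criterion for `Δ₀` formulas. -/
def HasD0Witnesses (X : Set ZFSet.{u}) : Prop :=
  ∀ (n : ℕ) (φ : D0) (v : ℕ → ZFSet.{u}), (∀ i, v i ∈ X) →
    (∃ x ∈ v n, SatD0 φ (consV x v)) → ∃ x ∈ X, x ∈ v n ∧ SatD0 φ (consV x v)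

namespace HasD0Witnesses

variable {X : Set ZFSet.{u}} {x y : ZFSet.{u}}

theorem exists_mem_notMem (hX : HasD0Witnesses X) (hx : x ∈ X) (hy : y ∈ X) (h : ¬ x ⊆ y) :
    ∃ z ∈ X, z ∈ x ∧ z ∉ y := by
  have hv : ∀ i, consV x (fun _ => y) i ∈ X := consV_mem hx fun _ => hy
  have hxy : ∃ z ∈ x, z ∉ y := by simpa [subset_def] using h
  exact hX 0 (.not (.mem 0 2)) _ hv hxy

theorem collapse_injOn (hX : HasD0Witnesses X) : Set.InjOn (collapse X) X := by
  intro x hx y hy hxy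
  induction x using ZFSet.inductionOn generalizing y with
  | _ x ih =>
  by_contra hne
  have : ¬ x ⊆ y ∨ ¬ y ⊆ x := not_and_or.1 fun h => hne (le_antisymm h.1 h.2)
  rcases this with h | h
  · obtain ⟨z, hzX, hzx, hzy⟩ := hX.exists_mem_notMem hx hy h
    obtain ⟨z', hz'y, hz'X, hz'⟩ := mem_collapse.1 (hxy ▸ collapse_mem_collapse hzx hzX)
    exact hzy (ih z hzx hzX hz'X hz'.symm ▸ hz'y)
  · obtain ⟨z, hzX, hzy, hzx⟩ := hX.exists_mem_notMem hy hx h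
    obtain ⟨z', hz'x, hz'X, hz'⟩ := mem_collapse.1 (hxy ▸ collapse_mem_collapse hzy hzX)
    exact hzx (ih z' hz'x hz'X hzX hz' ▸ hz'x)

theorem exists_mem_collapse_iff (hX : HasD0Witnesses X) {φ : D0}
    (ih : ∀ {v : ℕ → ZFSet.{u}}, (∀ i, v i ∈ X) → (SatD0 φ (collapse X ∘ v) ↔ SatD0 φ v))
    (n : ℕ) {v : ℕ → ZFSet.{u}} (hv : ∀ i, v i ∈ X) :
    (∃ x ∈ collapse X (v n), SatD0 φ (consV x (collapse X ∘ v))) ↔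
      ∃ x ∈ v n, SatD0 φ (consV x v) := by
  constructor
  · rintro ⟨x, hx, hsat⟩
    obtain ⟨z, hzn, hzX, rfl⟩ := mem_collapse.1 hx
    rw [← comp_consV, ih (consV_mem hzX hv)] at hsat
    exact ⟨z, hzn, hsat⟩
  · intro h
    obtain ⟨z, hzX, hzn, hsat⟩ := hX n φ v hv h
    refine ⟨_, collapse_mem_collapse hzn hzX, ?_⟩
    rwa [← comp_consV, ih (consV_mem hzX hv)]

/-- `X` is `Δ₀`-elementary in `V` by the Tarski–Vaught criterion, the collapse is an isomorphism
of `X` onto a transitive set, and `Δ₀` formulas are absolute for transitive sets. -/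
theorem satD0_collapse (hX : HasD0Witnesses X) (φ : D0) {v : ℕ → ZFSet.{u}}
    (hv : ∀ i, v i ∈ X) : SatD0 φ (collapse X ∘ v) ↔ SatD0 φ v := by
  induction φ generalizing v with
  | mem i j =>
    refine ⟨fun h => ?_, fun h => collapse_mem_collapse h (hv i)⟩
    obtain ⟨z, hzj, hzX, hz⟩ := mem_collapse.1 h
    change v i ∈ v j
    rwa [← hX.collapse_injOn hzX (hv i) hz]
  | eq i j => exact ⟨fun h => hX.collapse_injOn (hv i) (hv j) h, congrArg _⟩
  | not φ ih => exact not_congr (ih hv)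
  | and φ ψ ihφ ihψ => exact and_congr (ihφ hv) (ihψ hv)
  | or φ ψ ihφ ihψ => exact or_congr (ihφ hv) (ihψ hv)
  | ball n φ ih =>
    have h := hX.exists_mem_collapse_iff (φ := .not φ) (fun hv => not_congr (ih hv)) n hv
    simp only [SatD0]
    refine not_iff_not.1 ?_
    simpa only [SatD0, not_forall, exists_prop, Function.comp_apply] using h
  | bex n φ ih => exact hX.exists_mem_collapse_iff ih n hv

end HasD0Witnesses

/-- A symbol of every arity `k` for each `(n, φ)`, interpreted as a choice of witness of
`∃ x ∈ v n, φ (x :: v)` from the first `k` entries of `v` (the others set to `∅`). -/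
def skolemLanguage : FirstOrder.Language.{0, 0} := ⟨fun _ => ℕ × D0, fun _ => Empty⟩

noncomputable def d0Witness (n : ℕ) (φ : D0) (v : ℕ → ZFSet.{u}) : ZFSet.{u} :=
  Classical.epsilon fun x => x ∈ v n ∧ SatD0 φ (consV x v)

theorem d0Witness_spec {n : ℕ} {φ : D0} {v : ℕ → ZFSet.{u}}
    (h : ∃ x ∈ v n, SatD0 φ (consV x v)) :
    d0Witness n φ v ∈ v n ∧ SatD0 φ (consV (d0Witness n φ v) v) :=
  Classical.epsilon_spec (p := fun x => x ∈ v n ∧ SatD0 φ (consV x v)) h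

noncomputable instance : skolemLanguage.Structure ZFSet.{u} where
  funMap {k} s xs := d0Witness s.1 s.2 fun i => if h : i < k then xs ⟨i, h⟩ else ∅
  RelMap r := r.elim

noncomputable def skolemHull (B : Set ZFSet.{u}) : skolemLanguage.Substructure ZFSet.{u} :=
  Language.Substructure.closure skolemLanguage B

theorem subset_skolemHull (B : Set ZFSet.{u}) : B ⊆ skolemHull B :=
  Language.Substructure.subset_closure

theorem hasD0Witnesses_skolemHull (B : Set ZFSet.{u}) : HasD0Witnesses (skolemHull B) := by
  intro n φ v hv h
  -- `v n` and `φ (x :: v)` only see the first `k` entries of `v`.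
  let k := n + 1 + φ.varBound
  let xs : Fin k → ZFSet.{u} := fun i => v i
  let v' : ℕ → ZFSet.{u} := fun i => if h : i < k then xs ⟨i, h⟩ else ∅
  have hv' : ∀ i < k, v' i = v i := fun i hi => dif_pos hi
  have hsat (x : ZFSet.{u}) : SatD0 φ (consV x v') ↔ SatD0 φ (consV x v) :=
    satD0_congr fun i hi => consV_congr hv' i (by omega)
  have hn : v' n = v n := hv' n (by omega)
  obtain ⟨hmem, hwit⟩ := d0Witness_spec (n := n) (φ := φ) (v := v') (by simpa [hn, hsat] using h)
  exact ⟨_, Language.Substructure.fun_mem _ (n, φ) xs fun i => hv i, hn ▸ hmem,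
    (hsat _).1 hwit⟩

theorem mk_skolemHull_le (B : Set ZFSet.{u}) : #(skolemHull B) ≤ max ℵ₀ #B := by
  have hL : lift.{u + 1} #(Σ i, skolemLanguage.Functions i) ≤ ℵ₀ :=
    lift_le_aleph0.2 (mk_le_aleph0 (α := Σ _ : ℕ, ℕ × D0))
  calc #(skolemHull B) ≤ max ℵ₀ (#B + lift.{u + 1} #(Σ i, skolemLanguage.Functions i)) := by
        have h := Language.Substructure.lift_card_closure_le (L := skolemLanguage) (s := B)
        rwa [lift_uzero, lift_uzero] at h
    _ ≤ max ℵ₀ #B := by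
        refine max_le (le_max_left _ _) ((add_le_max _ _).trans ?_)
        exact max_le (max_le (le_max_right _ _) (hL.trans (le_max_left _ _))) (le_max_left _ _)

theorem isOrd_iff_isOrdinal {x : ZFSet.{u}} : IsOrd x ↔ x.IsOrdinal :=
  isOrdinal_iff_forall_mem_isTransitive.symm

theorem card_le_of_isFunc_surjective {b x f : ZFSet.{u}} (hf : IsFunc b x f)
    (hsurj : ∀ c ∈ x, ∃ a ∈ b, pair a c ∈ f) : x.card ≤ b.card := by
  rw [← lift_le.{u + 1}, ← cardinalMk_coe_sort, ← cardinalMk_coe_sort]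
  choose g hg using fun a : b => (hf.2 a a.2).exists
  refine mk_le_of_surjective (f := fun a : b => ⟨g a, (pair_mem_prod.1 (hf.1 (hg a))).2⟩) ?_
  rintro ⟨c, hc⟩
  obtain ⟨a, ha, hac⟩ := hsurj c hc
  exact ⟨⟨a, ha⟩, Subtype.ext ((hf.2 a ha).unique (hg _) hac)⟩

theorem exists_isFunc_surjective_of_card_eq {b x : ZFSet.{u}} (h : b.card = x.card) :
    ∃ f, IsFunc b x f ∧ ∀ c ∈ x, ∃ a ∈ b, pair a c ∈ f := by
  rw [← lift_inj.{u, u + 1}, ← cardinalMk_coe_sort, ← cardinalMk_coe_sort] at h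
  obtain ⟨s⟩ := Cardinal.eq.1 h
  refine ⟨range fun a : b => pair a (s a), ⟨?_, fun a ha => ⟨s ⟨a, ha⟩, ?_, ?_⟩⟩, ?_⟩
  · intro y hy
    obtain ⟨a, rfl⟩ := mem_range.1 hy
    exact pair_mem_prod.2 ⟨a.2, (s a).2⟩
  · exact mem_range_self (f := fun a : b => pair a (s a)) ⟨a, ha⟩
  · intro c hc
    obtain ⟨a', h'⟩ := mem_range.1 hc
    obtain ⟨rfl, rfl⟩ := pair_injective h'
    rfl
  · intro c hc
    exact ⟨s.symm ⟨c, hc⟩, (s.symm ⟨c, hc⟩).2, mem_range.2 ⟨s.symm ⟨c, hc⟩, by simp⟩⟩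

theorem isCardZ_toZFSet_iff {o : Ordinal.{u}} : IsCardZ o.toZFSet ↔ o.card.ord = o := by
  refine ⟨fun h => ?_, fun h => ⟨isOrd_iff_isOrdinal.2 (isOrdinal_toZFSet o), ?_⟩⟩
  · by_contra hne
    apply h.2
    refine ⟨_, Ordinal.toZFSet_mem_toZFSet_iff.2 ((ord_card_le o).lt_of_ne hne), ?_⟩
    exact exists_isFunc_surjective_of_card_eq (by simp)
  · rintro ⟨b, hb, f, hf, hsurj⟩
    obtain ⟨a, ha, rfl⟩ := Ordinal.mem_toZFSet_iff.1 hb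
    have hle := card_le_of_isFunc_surjective hf hsurj
    rw [Ordinal.card_toZFSet, Ordinal.card_toZFSet] at hle
    exact hle.not_gt (lt_ord.1 (ha.trans_le h.ge))

theorem card_union_toZFSet_le {T : ZFSet.{u}} {e : Cardinal.{u}} (he : ℵ₀ ≤ e)
    (hTe : T.card ≤ e) : (T ∪ (e.ord + 1).toZFSet).card ≤ e := by
  refine card_union_le.trans (add_le_of_le he hTe ?_)
  rw [Ordinal.card_toZFSet, Ordinal.card_add_one, card_ord, add_one_eq he]

theorem exists_small_ordinal_satD0 {ψ : D0} {T κ w : ZFSet.{u}} {v : ℕ → ZFSet.{u}}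
    {e : Cardinal.{u}} (he : ℵ₀ ≤ e) (hT : T.IsTransitive) (hTe : T.card ≤ e)
    (hv : ∀ i, v i ∈ T) (hκ : κ.IsOrdinal) (heκ : e.ord.toZFSet ∈ κ)
    (hw : SatD0 ψ (consV w (consV κ v))) :
    ∃ ρ : Ordinal.{u}, e.ord < ρ ∧ ρ.card ≤ e ∧ ∃ w', SatD0 ψ (consV w' (consV ρ.toZFSet v)) := by
  set T' := T ∪ (e.ord + 1).toZFSet
  have hT' : T'.IsTransitive := hT.union (isOrdinal_toZFSet _).isTransitive
  have heT' : e.ord.toZFSet ∈ T' :=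
    mem_union.2 (.inr (Ordinal.toZFSet_mem_toZFSet_iff.2 (Order.lt_add_one_iff.2 le_rfl)))
  set X : Set ZFSet.{u} := ↑(skolemHull (insert κ (insert w T')))
  have hT'X : (T' : Set ZFSet.{u}) ⊆ X := fun y hy => subset_skolemHull _ (.inr (.inr hy))
  have hXe : #X ≤ lift.{u + 1} e := by
    have he' : ℵ₀ ≤ lift.{u + 1} e := aleph0_le_lift.2 he
    have h1 : 1 ≤ lift.{u + 1} e := one_le_aleph0.trans he'
    have hT'e : #(T' : Set ZFSet.{u}) ≤ lift.{u + 1} e :=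
      (cardinalMk_coe_sort (x := T')).trans_le (lift_le.2 (card_union_toZFSet_le he hTe))
    refine (mk_skolemHull_le _).trans (max_le he' (mk_insert_le.trans (add_le_of_le he' ?_ h1)))
    exact mk_insert_le.trans (add_le_of_le he' hT'e h1)
  have hfix : ∀ y ∈ T', collapse X y = y := fun y => collapse_eq_self hT' hT'X
  set ρ := rank (collapse X κ)
  have hρ : ρ.toZFSet = collapse X κ := hκ.collapse.toZFSet_rank_eq
  refine ⟨ρ, ?_, ?_, collapse X w, ?_⟩
  · rw [← Ordinal.rank_toZFSet e.ord, ← hfix _ heT']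
    exact rank_lt_of_mem (collapse_mem_collapse heκ (hT'X heT'))
  · rw [← lift_le.{u + 1}, ← Ordinal.card_toZFSet, hρ]
    exact (lift_card_collapse_le X κ).trans hXe
  · have hvX : ∀ i, consV w (consV κ v) i ∈ X :=
      consV_mem (subset_skolemHull _ (.inr (.inl rfl)))
        (consV_mem (subset_skolemHull _ (.inl rfl)) fun i => hT'X (mem_union.2 (.inl (hv i))))
    have h := ((hasD0Witnesses_skolemHull _).satD0_collapse ψ hvX).2 hw
    have hcv : collapse X ∘ v = v := funext fun i => hfix _ (mem_union.2 (.inl (hv i)))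
    rwa [comp_consV, comp_consV, hcv, ← hρ] at h

/-- There is no Σ₁ formula `φ(x, p) = ∃w ψ(w, x, p)` (with `ψ` bounded) with a fixed
set parameter `p` such that, for all ordinals `α`, `α` is a cardinal iff `φ(α, p)`
holds in `V`. -/
theorem no_sigma1_definition_of_cardinality :
    ¬ ∃ (ψ : D0) (p : ZFSet), ∀ α : ZFSet, IsOrd α →
      (IsCardZ α ↔ ∃ w : ZFSet,
        SatD0 ψ (consV w (consV α (consV p fun _ => (∅ : ZFSet))))) := by
  rintro ⟨ψ, p, H⟩
  set e := max ℵ₀ (V_ (Order.succ (rank p))).card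
  have hκ : IsCardZ (Order.succ e).ord.toZFSet := isCardZ_toZFSet_iff.2 (by rw [card_ord])
  obtain ⟨w, hw⟩ := (H _ (isOrd_iff_isOrdinal.2 (isOrdinal_toZFSet _))).1 hκ
  have hv : ∀ i, consV p (fun _ => ∅) i ∈ V_ (Order.succ (rank p)) :=
    consV_mem (mem_vonNeumann_succ p) fun _ => mem_vonNeumann.2 (by simp)
  obtain ⟨ρ, heρ, hρe, hρ⟩ := exists_small_ordinal_satD0 (le_max_left _ _)
    (isTransitive_vonNeumann _) (le_max_right _ _) hv (isOrdinal_toZFSet _)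
    (Ordinal.toZFSet_mem_toZFSet_iff.2 (ord_lt_ord.2 (Order.lt_succ e))) hw
  have hρ_card := isCardZ_toZFSet_iff.1 ((H _ (isOrd_iff_isOrdinal.2 (isOrdinal_toZFSet ρ))).2 hρ)
  exact ((ord_le_ord.2 hρe).trans_lt heρ).ne hρ_card
end

section
/- The class function sending an ordinal α to the least cardinal greater than α is not bounded in cardinality: for every cardinal κ there is an ordinal α such that every cardinal μ > α satisfies card(μ) > κ. Hence there is no assignment α ↦ y with card(y) ≤ card(α) + ℵ₀ such that y is a cardinal greater than α for every α. -/
open Cardinal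

/-- The cardinal-successor function is not bounded in cardinality:
(1) for every cardinal `κ` there is an ordinal `α` such that every cardinal
`μ > α` (qua ordinal) has `card μ > κ`; hence (2) there is no assignment
`α ↦ y α` such that `y α` is always a cardinal greater than `α` while
`card (y α) ≤ card α + ℵ₀`. -/
theorem no_small_larger_cardinal_assignment :
    (∀ κ : Cardinal.{0}, ∃ α : Ordinal.{0}, ∀ μ : Ordinal.{0},
      μ.card.ord = μ → α < μ → κ < μ.card) ∧
    ¬ ∃ y : Ordinal.{0} → Ordinal.{0}, ∀ α : Ordinal.{0},
      (y α).card.ord = y α ∧ α < y α ∧ (y α).card ≤ α.card + ℵ₀ := by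
  constructor
  · intro κ
    refine ⟨κ.ord, fun μ hμ h => ?_⟩
    rw [← hμ] at h
    exact Cardinal.ord_lt_ord.mp h
  · rintro ⟨y, hy⟩
    obtain ⟨h1, h2, h3⟩ := hy (Cardinal.ord ℵ₀)
    rw [← h1] at h2
    have hlt : ℵ₀ < (y (Cardinal.ord ℵ₀)).card := Cardinal.ord_lt_ord.mp h2
    rw [Cardinal.card_ord, Cardinal.aleph0_add_aleph0] at h3
    exact absurd h3 (not_le.mpr hlt)
end

section
/- If c ⊆ On is a code for a set y (via a bijection f : α → tc({y}) with f(0) = y and c = {p(ι,ξ) : f(ι) ∈ f(ξ)}), and x ∈ tc(y), then the derived code c_x^c — obtained by letting α' be the order type of f⁻¹[tc({x})], o : α' → f⁻¹[tc({x})] the order isomorphism, and f'(ξ) = f(o(ξ)) — is a genuine code for x: f' is a bijection from α' to tc({x}) with f'(0) = x when o is rearranged so that the index of x maps to 0. -/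
/-- The class `tc({y})`: sets reachable from `y` by iterated membership,
including `y` itself. -/
def tcRC (y : ZFSet) : Set ZFSet := {z | Relation.ReflTransGen (· ∈ ·) z y}

/-- `c ⊆ On` is a code for the set `y` (relative to an ordinal pairing function
`p`): there is an ordinal `α` and a bijection `f` from `α` onto `tc({y})` with
`f 0 = y` such that `c = {p ι ξ : f ι ∈ f ξ}`. -/
def IsCode (p : Ordinal → Ordinal → Ordinal) (c : Set Ordinal) (y : ZFSet) : Prop :=
  ∃ (α : Ordinal) (f : Ordinal → ZFSet),
    Set.BijOn f (Set.Iio α) (tcRC y) ∧ f 0 = y ∧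
      c = {o | ∃ ι ∈ Set.Iio α, ∃ ξ ∈ Set.Iio α, f ι ∈ f ξ ∧ o = p ι ξ}

/-!
Since `x ∈ tc(y)`, we have `tc({x}) ⊆ tc({y})`, so `f` restricts to a bijection from
`f⁻¹[tc({x})]` onto `tc({x})`; composing with `o` gives the first claim. A code for `x` must be
indexed by ordinals of the universe of `α`, which `α'` need not belong to. But `tc({x})` is in
bijection with a set of ordinals below `α`, hence small in that universe and enumerated by some
ordinal `β` of it; transposing `0` with the index of `x` makes the enumeration start at `x`.
-/

open Set

universe u v w

theorem tcRC_subset_tcRC_of_mem {x y : ZFSet} (h : x ∈ tcRC y) : tcRC x ⊆ tcRC y :=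
  fun _ hz => hz.trans h

namespace Ordinal

theorem exists_bijOn_Iio {Z : Type w} [Nonempty Z] (t : Set Z) [Small.{u} t] :
    ∃ (β : Ordinal.{u}) (g : Ordinal.{u} → Z), BijOn g (Iio β) t := by
  let r : Shrink.{u} t → Shrink.{u} t → Prop := WellOrderingRel
  let e : Iio (type r) ≃ t := (enum r).toEquiv.trans (equivShrink t).symm
  let g : Ordinal.{u} → Z := fun ξ => if h : ξ < type r then e ⟨ξ, h⟩ else Classical.arbitrary Z
  have hg : ∀ ξ (h : ξ < type r), g ξ = e ⟨ξ, h⟩ := fun ξ h => dif_pos h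
  refine ⟨type r, g, fun ξ hξ => ?_, fun ξ₁ h₁ ξ₂ h₂ heq => ?_, fun z hz => ?_⟩
  · rw [hg ξ hξ]
    exact (e _).2
  · rw [hg ξ₁ h₁, hg ξ₂ h₂] at heq
    exact congrArg Subtype.val (e.injective (Subtype.ext heq))
  · obtain ⟨⟨ξ, hξ⟩, he⟩ := e.surjective ⟨z, hz⟩
    exact ⟨ξ, hξ, by rw [hg ξ hξ, he]⟩

theorem exists_bijOn_Iio_map_zero {Z : Type w} {β : Ordinal.{u}} {F : Ordinal.{u} → Z}
    {t : Set Z} (hF : BijOn F (Iio β) t) {a : Z} (ha : a ∈ t) :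
    ∃ G : Ordinal.{u} → Z, BijOn G (Iio β) t ∧ G 0 = a := by
  obtain ⟨ι, hι, rfl⟩ := hF.surjOn ha
  have h0 : (0 : Ordinal) ∈ Iio β := mem_Iio.2 (zero_le.trans_lt hι)
  exact ⟨F ∘ Equiv.swap 0 ι, hF.comp (Equiv.bijOn_swap h0 hι), by simp⟩

end Ordinal

theorem exists_isCode_of_bijOn (p : Ordinal.{u} → Ordinal.{u} → Ordinal.{v}) {x : ZFSet.{w}}
    {β : Ordinal.{u}} {F : Ordinal.{u} → ZFSet.{w}} (hF : BijOn F (Iio β) (tcRC x)) :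
    ∃ c : Set Ordinal.{v}, IsCode p c x := by
  obtain ⟨G, hG, hG0⟩ := Ordinal.exists_bijOn_Iio_map_zero hF Relation.ReflTransGen.refl
  exact ⟨_, β, G, hG, hG0, rfl⟩

theorem exists_isCode_of_bijOn_subset_Iio (p : Ordinal.{u} → Ordinal.{u} → Ordinal.{v})
    {x : ZFSet.{w}} {α : Ordinal.{u}} {s : Set Ordinal.{u}} (hs : s ⊆ Iio α)
    {f : Ordinal.{u} → ZFSet.{w}} (hf : BijOn f s (tcRC x)) :
    ∃ c : Set Ordinal.{v}, IsCode p c x := by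
  have : Small.{u} s := small_subset hs
  have : Small.{u} (tcRC x) := small_map hf.equiv.symm
  obtain ⟨β, F, hF⟩ := Ordinal.exists_bijOn_Iio (tcRC x)
  exact exists_isCode_of_bijOn p hF

theorem derived_code_is_code_general (p : Ordinal → Ordinal → Ordinal)
    (y : ZFSet) (α : Ordinal) (f : Ordinal → ZFSet) (c : Set Ordinal)
    (hf : Set.BijOn f (Set.Iio α) (tcRC y))
    (hc : c = {o | ∃ ι ∈ Set.Iio α, ∃ ξ ∈ Set.Iio α, f ι ∈ f ξ ∧ o = p ι ξ})
    (x : ZFSet) (hx : Relation.TransGen (· ∈ ·) x y)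
    (α' : Ordinal) (o : Ordinal → Ordinal)
    (ho2 : Set.BijOn o (Set.Iio α') {ι | ι ∈ Set.Iio α ∧ f ι ∈ tcRC x}) :
    Set.BijOn (fun ξ => f (o ξ)) (Set.Iio α') (tcRC x) ∧
      ∃ c' : Set Ordinal, IsCode p c' x := by
  have hfx : BijOn f (Iio α ∩ f ⁻¹' tcRC x) (tcRC x) :=
    hf.subset_right (tcRC_subset_tcRC_of_mem hx.to_reflTransGen)
  exact ⟨hfx.comp ho2, exists_isCode_of_bijOn_subset_Iio p inter_subset_left hfx⟩

/-- The derived code is a genuine code: if `c` codes `y` via `f : α → tc({y})`,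
`x ∈ tc(y)`, `α'` is the order type of `f⁻¹[tc({x})]` and `o : α' → f⁻¹[tc({x})]`
is the order isomorphism, then `f' = f ∘ o` is a bijection from `α'` onto
`tc({x})`, and (after rearranging so that the index of `x` maps to `0`) it yields
a code for `x`. -/
theorem derived_code_is_code (p : Ordinal → Ordinal → Ordinal)
    (hp : Function.Injective fun q : Ordinal × Ordinal => p q.1 q.2)
    (y : ZFSet) (α : Ordinal) (f : Ordinal → ZFSet) (c : Set Ordinal)
    (hf : Set.BijOn f (Set.Iio α) (tcRC y)) (hf0 : f 0 = y)
    (hc : c = {o | ∃ ι ∈ Set.Iio α, ∃ ξ ∈ Set.Iio α, f ι ∈ f ξ ∧ o = p ι ξ})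
    (x : ZFSet) (hx : Relation.TransGen (· ∈ ·) x y)
    (α' : Ordinal) (o : Ordinal → Ordinal)
    (ho1 : StrictMonoOn o (Set.Iio α'))
    (ho2 : Set.BijOn o (Set.Iio α') {ι | ι ∈ Set.Iio α ∧ f ι ∈ tcRC x}) :
    Set.BijOn (fun ξ => f (o ξ)) (Set.Iio α') (tcRC x) ∧
      ∃ c' : Set Ordinal, IsCode p c' x :=
  derived_code_is_code_general p y α f c hf hc x hx α' o ho2
end

section
/- Two codes code the same set iff there is an isomorphism of the coded membership relations: if c = c_f and d = c_g are codes (from bijections f : α → tc({x}), g : β → tc({y}) with f(0)=x, g(0)=y), then x = y iff there is a bijection h : α → β with h(0) = 0 and p(ι,ξ) ∈ c ↔ p(h(ι),h(ξ)) ∈ d for all ι, ξ < α. -/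
lemma self_mem_tcRC (y : ZFSet) : y ∈ tcRC y := Relation.ReflTransGen.refl

lemma mem_tcRC_of_mem {x z w : ZFSet} (hw : w ∈ tcRC x) (hzw : z ∈ w) : z ∈ tcRC x :=
  Relation.ReflTransGen.head hzw hw

lemma mem_setOf_pair_iff {ι γ : Type*} {p : ι → ι → γ}
    (hp : Function.Injective fun q : ι × ι => p q.1 q.2) {s : Set ι} {r : ι → ι → Prop}
    {i j : ι} (hi : i ∈ s) (hj : j ∈ s) :
    p i j ∈ {o | ∃ i ∈ s, ∃ j ∈ s, r i j ∧ o = p i j} ↔ r i j := by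
  refine ⟨?_, fun hr => ⟨i, hi, j, hj, hr, rfl⟩⟩
  rintro ⟨i', -, j', -, hr, heq⟩
  obtain ⟨rfl, rfl⟩ := Prod.mk.inj (hp heq)
  exact hr

theorem ZFSet.eqOn_of_mem_iff_mem {ι : Type*} {s : Set ι} {A B : Set ZFSet} {f g : ι → ZFSet}
    (hA : ∀ w ∈ A, ∀ z ∈ w, z ∈ A) (hB : ∀ w ∈ B, ∀ z ∈ w, z ∈ B)
    (hfA : Set.MapsTo f s A) (hfs : Set.SurjOn f s A)
    (hgB : Set.MapsTo g s B) (hgs : Set.SurjOn g s B)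
    (hfg : ∀ i ∈ s, ∀ j ∈ s, (f i ∈ f j ↔ g i ∈ g j)) :
    Set.EqOn f g s := by
  suffices ∀ z : ZFSet, ∀ i ∈ s, f i = z → g i = z from fun i hi => (this _ i hi rfl).symm
  intro z
  induction z using ZFSet.inductionOn with
  | _ z ih =>
    rintro i hi rfl
    ext w
    constructor
    · intro hw
      obtain ⟨j, hj, rfl⟩ := hgs (hB _ (hgB hi) w hw)
      have hji : f j ∈ f i := (hfg j hj i hi).2 hw
      rwa [ih _ hji j hj rfl]
    · intro hw
      obtain ⟨j, hj, rfl⟩ := hfs (hA _ (hfA hi) w hw)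
      rw [← ih _ hw j hj rfl]
      exact (hfg j hj i hi).1 hw

lemma zero_lt_of_surjOn_tcRC {f : Ordinal → ZFSet} {α : Ordinal} {x : ZFSet}
    (hf : Set.SurjOn f (Set.Iio α) (tcRC x)) : 0 < α := by
  obtain ⟨i, hi, -⟩ := hf (self_mem_tcRC x)
  exact (zero_le (a := i)).trans_lt hi

/-- Two codes code the same set iff there is an isomorphism of the coded
membership relations preserving the distinguished point: if `c` codes `x` via
`f : α → tc({x})` (with `f 0 = x`) and `d` codes `y` via `g : β → tc({y})`
(with `g 0 = y`), then `x = y` iff there is a bijection `h : α → β` with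
`h 0 = 0` and `p ι ξ ∈ c ↔ p (h ι) (h ξ) ∈ d` for all `ι, ξ < α`. -/
theorem codes_same_set_iff_iso (p : Ordinal → Ordinal → Ordinal)
    (hp : Function.Injective fun q : Ordinal × Ordinal => p q.1 q.2)
    (x y : ZFSet) (α β : Ordinal) (f g : Ordinal → ZFSet) (c d : Set Ordinal)
    (hf : Set.BijOn f (Set.Iio α) (tcRC x)) (hf0 : f 0 = x)
    (hc : c = {o | ∃ ι ∈ Set.Iio α, ∃ ξ ∈ Set.Iio α, f ι ∈ f ξ ∧ o = p ι ξ})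
    (hg : Set.BijOn g (Set.Iio β) (tcRC y)) (hg0 : g 0 = y)
    (hd : d = {o | ∃ ι ∈ Set.Iio β, ∃ ξ ∈ Set.Iio β, g ι ∈ g ξ ∧ o = p ι ξ}) :
    x = y ↔ ∃ h : Ordinal → Ordinal, Set.BijOn h (Set.Iio α) (Set.Iio β) ∧
      h 0 = 0 ∧ ∀ ι ∈ Set.Iio α, ∀ ξ ∈ Set.Iio α, (p ι ξ ∈ c ↔ p (h ι) (h ξ) ∈ d) := by
  subst hc hd
  have hα : (0 : Ordinal) ∈ Set.Iio α := zero_lt_of_surjOn_tcRC hf.surjOn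
  have hβ : (0 : Ordinal) ∈ Set.Iio β := zero_lt_of_surjOn_tcRC hg.surjOn
  constructor
  · rintro rfl
    have hginv := hg.invOn_invFunOn
    have hh := (hg.symm hginv.symm).comp hf
    have hgh : ∀ k ∈ Set.Iio α, g (Function.invFunOn g (Set.Iio β) (f k)) = f k :=
      fun k hk => hginv.2 (hf.mapsTo hk)
    refine ⟨Function.invFunOn g (Set.Iio β) ∘ f, hh, ?_, ?_⟩
    · refine hg.injOn (hh.mapsTo hα) hβ ?_
      rw [Function.comp_apply, hgh 0 hα, hf0, hg0]
    · intro i hi j hj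
      rw [mem_setOf_pair_iff hp hi hj, mem_setOf_pair_iff hp (hh.mapsTo hi) (hh.mapsTo hj),
        Function.comp_apply, Function.comp_apply, hgh i hi, hgh j hj]
  · rintro ⟨h, hh, hh0, hiso⟩
    have hfgh : Set.EqOn f (g ∘ h) (Set.Iio α) :=
      ZFSet.eqOn_of_mem_iff_mem (fun _ hw _ => mem_tcRC_of_mem hw)
        (fun _ hw _ => mem_tcRC_of_mem hw) hf.mapsTo hf.surjOn (hg.mapsTo.comp hh.mapsTo)
        (hg.surjOn.comp hh.surjOn) fun i hi j hj =>
          (mem_setOf_pair_iff hp hi hj).symm.trans <| (hiso i hi j hj).trans <|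
            mem_setOf_pair_iff hp (hh.mapsTo hi) (hh.mapsTo hj)
    rw [← hf0, ← hg0, hfgh hα, Function.comp_apply, hh0]
end
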